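/- For every integer n ≥ 2, the set of admissible configurations of size n+1 is finite and its cardinality equals twice the cardinality of the (finite) set of admissible configurations of size n. -/

import Mathlib

/-- The maximum entry of a finite set of integers (`0` for the empty set). -/
def fmax (C : Finset ℤ) : ℤ := WithBot.unbotD 0 C.max

/-- The minimum entry of a finite set of integers (`0` for the empty set). -/
def fmin (C : Finset ℤ) : ℤ := WithTop.untopD 0 C.min

/-- A *chain* is a nonempty set of integers of the form `{c, c-2, …, c-2k}`. -/
def IsChainSet (C : Finset ℤ) : Prop :=
  ∃ (c : ℤ) (k : ℕ), C = (Finset.range (k + 1)).image (fun i : ℕ => c - 2 * (i : ℤ))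

/-- Two chains with disjoint entries, with maxima `A, B` and minima `a, b`, are *linked*
if `A > B > a` or `B > A > b`. -/
def LinkedChains (C D : Finset ℤ) : Prop :=
  Disjoint C D ∧
    ((fmax D < fmax C ∧ fmin C < fmax D) ∨ (fmax C < fmax D ∧ fmin D < fmax C))

/-- The set of all entries of a collection of chains. -/
def entriesOf (S : Finset (Finset ℤ)) : Finset ℤ := S.biUnion id

/-- A finite collection of pairwise disjoint chains. -/
def IsChainCollection (S : Finset (Finset ℤ)) : Prop :=
  (∀ C ∈ S, IsChainSet C) ∧ ∀ C ∈ S, ∀ D ∈ S, C ≠ D → Disjoint C D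

/-- A collection of pairwise disjoint chains is *interlaced* if any two of its chains are
joined by a finite sequence of chains of the collection in which consecutive chains are
linked. -/
def Interlaced (S : Finset (Finset ℤ)) : Prop :=
  ∀ C ∈ S, ∀ D ∈ S,
    Relation.ReflTransGen (fun X Y => X ∈ S ∧ Y ∈ S ∧ LinkedChains X Y) C D

/-- An *admissible configuration of size `n`*: an interlaced collection of pairwise disjoint
chains of positive integers with `n` entries in total and smallest entry equal to `1`. -/
def AdmissibleConfig (n : ℕ) (S : Finset (Finset ℤ)) : Prop :=
  IsChainCollection S ∧ Interlaced S ∧ (entriesOf S).card = n ∧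
    (∀ x ∈ entriesOf S, 0 < x) ∧ (1 : ℤ) ∈ entriesOf S

/-!
For a collection of chains whose entries are positive and include `1`, being interlaced is a
covering condition: every gap `(x, x + 1)` below the top entry `M` must be straddled by a chain
(`fmin C ≤ x < fmax C`). Chains lying below an unstraddled gap can only be linked to each other;
conversely, straddling chains link every chain, step by step upwards, to the chain through `M`.
Since a straddling chain contains `x` or `x + 1`, an admissible configuration of size `n` has
`M ≤ 2n`, whence finiteness.

For `n ≥ 2` the chain through `M` also contains `M - 2`. Deleting the top (the chain `{M - 1}`
if it occurs, the entry `M` otherwise) maps admissible configurations of size `n + 1` onto those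
of size `n`, exactly two-to-one: the two preimages of a configuration with top `M` add `M + 2` to
the chain through `M`, resp. add `M + 1` to the chain through `M - 1` (or the new chain `{M - 1}`
if `M - 1` is not an entry), and they are told apart by whether their top minus one is an entry.
-/

open Finset

section Extremes

variable {C : Finset ℤ} {x m : ℤ}

lemma fmax_eq_max' (h : C.Nonempty) : fmax C = C.max' h := by
  rw [fmax, ← coe_max' h, WithBot.unbotD_coe]

lemma fmin_eq_min' (h : C.Nonempty) : fmin C = C.min' h := by
  rw [fmin, ← coe_min' h, WithTop.untopD_coe]

lemma fmax_mem (h : C.Nonempty) : fmax C ∈ C := fmax_eq_max' h ▸ max'_mem C h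

lemma fmin_mem (h : C.Nonempty) : fmin C ∈ C := fmin_eq_min' h ▸ min'_mem C h

lemma le_fmax (hx : x ∈ C) : x ≤ fmax C := fmax_eq_max' ⟨x, hx⟩ ▸ le_max' C x hx

lemma fmin_le (hx : x ∈ C) : fmin C ≤ x := fmin_eq_min' ⟨x, hx⟩ ▸ min'_le C x hx

lemma fmax_eq_of_forall_le (hm : m ∈ C) (h : ∀ x ∈ C, x ≤ m) : fmax C = m :=
  (h _ (fmax_mem ⟨m, hm⟩)).antisymm (le_fmax hm)

end Extremes

def mkChain (c : ℤ) (k : ℕ) : Finset ℤ :=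
  (range (k + 1)).image fun i : ℕ => c - 2 * (i : ℤ)

section MkChain

variable {c x : ℤ} {k : ℕ}

lemma mem_mkChain : x ∈ mkChain c k ↔ c - 2 * k ≤ x ∧ x ≤ c ∧ 2 ∣ c - x := by
  simp only [mkChain, mem_image, mem_range]
  constructor
  · rintro ⟨i, hi, rfl⟩
    exact ⟨by omega, by omega, ⟨i, by ring⟩⟩
  · rintro ⟨h₁, h₂, d, hd⟩
    exact ⟨d.toNat, by omega, by omega⟩

lemma fmax_mkChain : fmax (mkChain c k) = c :=
  fmax_eq_of_forall_le (mem_mkChain.2 ⟨by omega, le_rfl, by simp⟩)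
    fun _ hx => (mem_mkChain.1 hx).2.1

lemma fmin_mkChain : fmin (mkChain c k) = c - 2 * k := by
  have h : c - 2 * k ∈ mkChain c k := mem_mkChain.2 ⟨le_rfl, by omega, ⟨k, by ring⟩⟩
  exact (fmin_le h).antisymm (mem_mkChain.1 (fmin_mem ⟨_, h⟩)).1

lemma insert_mkChain : insert (c + 2) (mkChain c k) = mkChain (c + 2) (k + 1) := by
  ext x
  simp only [mem_insert, mem_mkChain]
  constructor
  · rintro (rfl | ⟨h₁, h₂, d, hd⟩)
    · exact ⟨by omega, le_rfl, by simp⟩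
    · exact ⟨by omega, by omega, ⟨d + 1, by omega⟩⟩
  · rintro ⟨h₁, h₂, d, hd⟩
    obtain rfl | h := eq_or_lt_of_le h₂
    · exact .inl rfl
    · exact .inr ⟨by omega, by omega, ⟨d - 1, by omega⟩⟩

lemma erase_mkChain : (mkChain c (k + 1)).erase c = mkChain (c - 2) k := by
  ext x
  simp only [mem_erase, mem_mkChain]
  constructor
  · rintro ⟨hne, h₁, h₂, d, hd⟩
    exact ⟨by omega, by omega, ⟨d - 1, by omega⟩⟩
  · rintro ⟨h₁, h₂, d, hd⟩
    exact ⟨by omega, by omega, by omega, ⟨d + 1, by omega⟩⟩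

lemma mkChain_zero : mkChain c 0 = {c} := by
  ext x
  simp only [mem_mkChain, mem_singleton]
  constructor
  · rintro ⟨h₁, h₂, -⟩
    omega
  · rintro rfl
    exact ⟨by omega, le_rfl, by simp⟩

end MkChain

namespace IsChainSet

variable {C : Finset ℤ} {x : ℤ}

lemma exists_eq_mkChain (h : IsChainSet C) : ∃ k : ℕ, C = mkChain (fmax C) k := by
  obtain ⟨c, k, rfl⟩ := h
  exact ⟨k, by rw [← mkChain, fmax_mkChain]⟩

lemma nonempty (h : IsChainSet C) : C.Nonempty := by
  obtain ⟨c, k, rfl⟩ := h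
  exact ⟨c, mem_mkChain.2 ⟨by omega, le_rfl, by simp⟩⟩

lemma mem_iff (h : IsChainSet C) : x ∈ C ↔ fmin C ≤ x ∧ x ≤ fmax C ∧ 2 ∣ fmax C - x := by
  obtain ⟨k, hk⟩ := h.exists_eq_mkChain
  conv_lhs => rw [hk]
  rw [hk, fmax_mkChain, fmin_mkChain, mem_mkChain]

lemma two_dvd_fmax_sub_fmin (h : IsChainSet C) : 2 ∣ fmax C - fmin C :=
  ((h.mem_iff).1 (fmin_mem h.nonempty)).2.2

lemma fmax_sub_two_mem (h : IsChainSet C) (hlt : fmin C < fmax C) : fmax C - 2 ∈ C := by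
  obtain ⟨d, hd⟩ := h.two_dvd_fmax_sub_fmin
  exact h.mem_iff.2 ⟨by omega, by omega, ⟨1, by ring⟩⟩

lemma insert_fmax_add_two (h : IsChainSet C) : IsChainSet (insert (fmax C + 2) C) := by
  obtain ⟨k, hk⟩ := h.exists_eq_mkChain
  rw [hk, fmax_mkChain, insert_mkChain]
  exact ⟨_, _, rfl⟩

lemma erase_fmax (h : IsChainSet C) (hlt : fmin C < fmax C) : IsChainSet (C.erase (fmax C)) := by
  obtain ⟨k, hk⟩ := h.exists_eq_mkChain
  rw [hk, fmin_mkChain, fmax_mkChain] at hlt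
  obtain ⟨j, rfl⟩ : ∃ j, k = j + 1 := Nat.exists_eq_succ_of_ne_zero (by omega)
  rw [hk, fmax_mkChain, erase_mkChain]
  exact ⟨_, _, rfl⟩

lemma add_one_notMem (h : IsChainSet C) (hx : x ∈ C) : x + 1 ∉ C := by
  intro hx'
  obtain ⟨d, hd⟩ := (h.mem_iff.1 hx).2.2
  obtain ⟨e, he⟩ := (h.mem_iff.1 hx').2.2
  omega

lemma mem_or_add_one_mem (h : IsChainSet C) (h₁ : fmin C ≤ x) (h₂ : x < fmax C) :
    x ∈ C ∨ x + 1 ∈ C := by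
  obtain ⟨d, hd⟩ | ⟨d, hd⟩ := Int.even_or_odd (fmax C - x)
  · exact .inl (h.mem_iff.2 ⟨h₁, h₂.le, ⟨d, by omega⟩⟩)
  · obtain ⟨e, he⟩ := h.two_dvd_fmax_sub_fmin
    exact .inr (h.mem_iff.2 ⟨by omega, h₂, ⟨d, by omega⟩⟩)

end IsChainSet

lemma isChainSet_singleton (x : ℤ) : IsChainSet {x} := ⟨x, 0, mkChain_zero.symm⟩

section Collections

variable {S : Finset (Finset ℤ)} {C D T : Finset ℤ} {x : ℤ}

lemma mem_entriesOf : x ∈ entriesOf S ↔ ∃ C ∈ S, x ∈ C := by simp [entriesOf]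

lemma subset_entriesOf (hC : C ∈ S) : C ⊆ entriesOf S := subset_biUnion_of_mem id hC

lemma entriesOf_insert : entriesOf (insert C S) = C ∪ entriesOf S := biUnion_insert

namespace IsChainCollection

lemma eq_of_mem_of_mem (hS : IsChainCollection S) (hC : C ∈ S) (hD : D ∈ S) (hxC : x ∈ C)
    (hxD : x ∈ D) : C = D := by
  by_contra hne
  exact disjoint_left.1 (hS.2 C hC D hD hne) hxC hxD

lemma singleton_notMem (hS : IsChainCollection S) (hT : T ∈ S) {y : ℤ} (hx : x ∈ T) (hy : y ∈ T)
    (hxy : x ≠ y) : {x} ∉ S := fun h =>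
  hxy (mem_singleton.1 (hS.eq_of_mem_of_mem hT h hx (mem_singleton_self x) ▸ hy)).symm

lemma entriesOf_erase (hS : IsChainCollection S) (hT : T ∈ S) :
    entriesOf (S.erase T) = entriesOf S \ T := by
  ext x
  simp only [mem_entriesOf, mem_sdiff, mem_erase]
  constructor
  · rintro ⟨C, ⟨hCT, hC⟩, hxC⟩
    exact ⟨⟨C, hC, hxC⟩, fun hxT => hCT (hS.eq_of_mem_of_mem hC hT hxC hxT)⟩
  · rintro ⟨⟨C, hC, hxC⟩, hxT⟩
    exact ⟨C, ⟨by rintro rfl; exact hxT hxC, hC⟩, hxC⟩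

lemma insert_of_disjoint {T' : Finset ℤ} (hS : IsChainCollection S) (hT' : IsChainSet T')
    (hdisj : Disjoint T' (entriesOf S)) : IsChainCollection (insert T' S) := by
  have hdisjC : ∀ C ∈ S, Disjoint T' C := fun C hC => hdisj.mono_right (subset_entriesOf hC)
  simp only [IsChainCollection, forall_mem_insert]
  exact ⟨⟨hT', hS.1⟩, ⟨fun h => absurd rfl h, fun C hC _ => hdisjC C hC⟩,
    fun C hC => ⟨fun _ => (hdisjC C hC).symm, hS.2 C hC⟩⟩

lemma subset {S' : Finset (Finset ℤ)} (hS : IsChainCollection S) (h : S' ⊆ S) :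
    IsChainCollection S' :=
  ⟨fun C hC => hS.1 C (h hC), fun C hC D hD => hS.2 C (h hC) D (h hD)⟩

lemma replace {T' : Finset ℤ} (hS : IsChainCollection S) (hT : T ∈ S) (hT' : IsChainSet T')
    (hdisj : Disjoint T' (entriesOf S \ T)) : IsChainCollection (insert T' (S.erase T)) :=
  (hS.subset (erase_subset T S)).insert_of_disjoint hT' (hS.entriesOf_erase hT ▸ hdisj)

end IsChainCollection

end Collections

def extendAt (S : Finset (Finset ℤ)) (a b : ℤ) : Finset (Finset ℤ) :=
  S.image fun C => if a ∈ C then insert b C else C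

def eraseAt (S : Finset (Finset ℤ)) (a : ℤ) : Finset (Finset ℤ) :=
  S.image (·.erase a)

lemma Finset.image_eq_insert_erase {α : Type*} [DecidableEq α] {S : Finset α} {T : α}
    (hT : T ∈ S) {g : α → α} (hg : ∀ C ∈ S, C ≠ T → g C = C) :
    S.image g = insert (g T) (S.erase T) := by
  conv_lhs => rw [← insert_erase hT]
  rw [image_insert, image_congr fun C hC => hg C (mem_of_mem_erase hC) (ne_of_mem_erase hC),
    image_id']

section Surgery

variable {S : Finset (Finset ℤ)} {T : Finset ℤ} {a b : ℤ}

lemma eraseAt_extendAt (hb : b ∉ entriesOf S) : eraseAt (extendAt S a b) b = S := by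
  rw [eraseAt, extendAt, image_image]
  refine (image_congr fun C hC => ?_).trans image_id'
  have hbC : b ∉ C := fun h => hb (subset_entriesOf hC h)
  simp only [Function.comp_apply]
  split_ifs <;> simp [hbC]

lemma entriesOf_eraseAt (S : Finset (Finset ℤ)) (a : ℤ) :
    entriesOf (eraseAt S a) = (entriesOf S).erase a := by
  rw [entriesOf, eraseAt, image_biUnion, entriesOf, erase_biUnion]
  rfl

namespace IsChainCollection

lemma extendAt_eq (hS : IsChainCollection S) (hT : T ∈ S) (ha : a ∈ T) (b : ℤ) :
    extendAt S a b = insert (insert b T) (S.erase T) := by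
  rw [extendAt, image_eq_insert_erase hT fun _ hC hne => if_neg fun haC =>
    hne (hS.eq_of_mem_of_mem hC hT haC ha), if_pos ha]

lemma eraseAt_eq (hS : IsChainCollection S) (hT : T ∈ S) (ha : a ∈ T) :
    eraseAt S a = insert (T.erase a) (S.erase T) :=
  image_eq_insert_erase hT fun _ hC hne => erase_eq_of_notMem fun haC =>
    hne (hS.eq_of_mem_of_mem hC hT haC ha)

lemma extendAt_eraseAt (hS : IsChainCollection S) (hT : T ∈ S) (ha : a ∈ T) (hb : b ∈ T)
    (hab : a ≠ b) :
    extendAt (eraseAt S b) a b = S := by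
  rw [eraseAt, extendAt, image_image]
  refine (image_congr fun C hC => ?_).trans image_id'
  by_cases hCT : C = T
  · subst hCT
    simp [mem_erase, hab, ha, insert_erase hb]
  · have haC : a ∉ C := fun h => hCT (hS.eq_of_mem_of_mem hC hT h ha)
    have hbC : b ∉ C := fun h => hCT (hS.eq_of_mem_of_mem hC hT h hb)
    simp [erase_eq_of_notMem hbC, haC]

lemma entriesOf_extendAt (hS : IsChainCollection S) (hT : T ∈ S) (ha : a ∈ T) (b : ℤ) :
    entriesOf (extendAt S a b) = insert b (entriesOf S) := by
  rw [hS.extendAt_eq hT ha, entriesOf_insert, hS.entriesOf_erase hT, insert_union,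
    union_sdiff_of_subset (subset_entriesOf hT)]

end IsChainCollection

end Surgery

def topEntry (S : Finset (Finset ℤ)) : ℤ := fmax (entriesOf S)

section TopEntry

variable {S : Finset (Finset ℤ)} {T : Finset ℤ} {a b y : ℤ}

lemma fmax_eq_topEntry (hT : T ∈ S) (htop : topEntry S ∈ T) :
    fmax T = topEntry S :=
  fmax_eq_of_forall_le htop fun _ hx => le_fmax (subset_entriesOf hT hx)

lemma entriesOf_insert_singleton : entriesOf (insert {y} S) = insert y (entriesOf S) := by
  rw [entriesOf_insert, insert_eq]

lemma topEntry_insert_singleton (hne : (entriesOf S).Nonempty) (hy : y ≤ topEntry S) :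
    topEntry (insert {y} S) = topEntry S := by
  rw [topEntry, entriesOf_insert_singleton]
  exact fmax_eq_of_forall_le (mem_insert_of_mem (fmax_mem hne))
    (forall_mem_insert _ _ _ |>.2 ⟨hy, fun _ => le_fmax⟩)

lemma IsChainCollection.topEntry_extendAt (hS : IsChainCollection S) (hT : T ∈ S) (ha : a ∈ T)
    (hb : topEntry S ≤ b) : topEntry (extendAt S a b) = b := by
  rw [topEntry, hS.entriesOf_extendAt hT ha]
  exact fmax_eq_of_forall_le (mem_insert_self _ _)
    (forall_mem_insert _ _ _ |>.2 ⟨le_rfl, fun _ hx => (le_fmax hx).trans hb⟩)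

lemma IsChainCollection.topEntry_erase (hS : IsChainCollection S) (hT : T ∈ S)
    (hne : (entriesOf S).Nonempty) (htop : topEntry S ∉ T) : topEntry (S.erase T) = topEntry S := by
  rw [topEntry, hS.entriesOf_erase hT]
  exact fmax_eq_of_forall_le (mem_sdiff.2 ⟨fmax_mem hne, htop⟩)
    fun _ hx => le_fmax (mem_sdiff.1 hx).1

lemma IsChainCollection.exists_straddle_topEntry_sub_two (hS : IsChainCollection S) (hT : T ∈ S)
    (htop : topEntry S ∈ T) (hmem : topEntry S - 1 ∈ entriesOf S) (hsing : {topEntry S - 1} ∉ S) :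
    ∃ V ∈ S, V ≠ T ∧ fmin V ≤ topEntry S - 2 ∧ topEntry S - 2 < fmax V := by
  obtain ⟨V, hV, hMV⟩ := mem_entriesOf.1 hmem
  have hVT : V ≠ T := by
    rintro rfl
    exact (hS.1 V hV).add_one_notMem hMV (by simpa using htop)
  obtain ⟨z, hz, hzne⟩ : ∃ z ∈ V, z ≠ topEntry S - 1 := by
    by_contra! h
    exact hsing (eq_singleton_iff_unique_mem.2 ⟨hMV, h⟩ ▸ hV)
  have hzM : z ≠ topEntry S := fun h => hVT (hS.eq_of_mem_of_mem hV hT (h ▸ hz) htop)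
  have hzle : z ≤ topEntry S := le_fmax (subset_entriesOf hV hz)
  exact ⟨V, hV, hVT, (fmin_le hz).trans (by omega), by linarith [le_fmax hMV]⟩

end TopEntry

def IsCovered (S : Finset (Finset ℤ)) : Prop :=
  ∀ x : ℤ, 1 ≤ x → x < topEntry S → ∃ C ∈ S, fmin C ≤ x ∧ x < fmax C

section Covering

variable {S : Finset (Finset ℤ)} {C D : Finset ℤ}

lemma LinkedChains.symm (h : LinkedChains C D) : LinkedChains D C :=
  ⟨h.1.symm, h.2.symm⟩

lemma IsChainCollection.linkedChains_of_straddle (hS : IsChainCollection S) (hC : C ∈ S)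
    (hD : D ∈ S) (h₁ : fmin D ≤ fmax C) (h₂ : fmax C < fmax D) : LinkedChains C D := by
  have hne : C ≠ D := by rintro rfl; exact h₂.false
  have hdisj := hS.2 C hC D hD hne
  have h₁' : fmin D ≠ fmax C := fun h =>
    disjoint_left.1 hdisj (fmax_mem (hS.1 C hC).nonempty) (h ▸ fmin_mem (hS.1 D hD).nonempty)
  exact ⟨hdisj, .inr ⟨h₂, lt_of_le_of_ne h₁ h₁'⟩⟩

lemma IsCovered.exists_reflTransGen_top (hcov : IsCovered S) (hS : IsChainCollection S)
    (hpos : ∀ x ∈ entriesOf S, 0 < x) {C : Finset ℤ} (hC : C ∈ S) :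
    ∃ T ∈ S, topEntry S ∈ T ∧
      Relation.ReflTransGen (fun X Y => X ∈ S ∧ Y ∈ S ∧ LinkedChains X Y) C T := by
  have hCmax := subset_entriesOf hC (fmax_mem (hS.1 C hC).nonempty)
  have hCtop : fmax C ≤ topEntry S := le_fmax hCmax
  obtain htop | hlt := hCtop.eq_or_lt
  · exact ⟨C, hC, htop ▸ fmax_mem (hS.1 C hC).nonempty, .refl⟩
  · obtain ⟨D, hD, h₁, h₂⟩ := hcov (fmax C) (hpos _ hCmax) hlt
    obtain ⟨T, hT, htopT, hDT⟩ := hcov.exists_reflTransGen_top hS hpos hD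
    exact ⟨T, hT, htopT, .head ⟨hC, hD, hS.linkedChains_of_straddle hC hD h₁ h₂⟩ hDT⟩
termination_by (topEntry S - fmax C).toNat
decreasing_by unfold topEntry at *; omega

lemma IsCovered.interlaced (hcov : IsCovered S) (hS : IsChainCollection S)
    (hpos : ∀ x ∈ entriesOf S, 0 < x) : Interlaced S := by
  intro C hC D hD
  obtain ⟨T, hT, htopT, hCT⟩ := hcov.exists_reflTransGen_top hS hpos hC
  obtain ⟨T', hT', htopT', hDT'⟩ := hcov.exists_reflTransGen_top hS hpos hD
  obtain rfl := hS.eq_of_mem_of_mem hT hT' htopT htopT'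
  have hsymm : Std.Symm fun X Y => X ∈ S ∧ Y ∈ S ∧ LinkedChains X Y :=
    ⟨fun _ _ h => ⟨h.2.1, h.1, h.2.2.symm⟩⟩
  exact hCT.trans (Relation.ReflTransGen.stdSymm.symm _ _ hDT')

lemma Interlaced.isCovered (hint : Interlaced S) (h1 : (1 : ℤ) ∈ entriesOf S) : IsCovered S := by
  intro x hx hxtop
  by_contra! hgap
  -- with no chain straddling `(x, x + 1)`, chains below the gap are linked only to such chains
  have hbelow : ∀ {X Y}, Relation.ReflTransGen (fun X Y => X ∈ S ∧ Y ∈ S ∧ LinkedChains X Y) X Y →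
      fmax X ≤ x → fmax Y ≤ x := by
    intro X Y hXY
    induction hXY with
    | refl => exact id
    | tail _ hYZ ih =>
      intro hX
      obtain ⟨-, hZ, -, (⟨h₁, -⟩ | ⟨-, h₂⟩)⟩ := hYZ
      · exact (h₁.trans_le (ih hX)).le
      · exact hgap _ hZ (h₂.trans_le (ih hX)).le
  obtain ⟨C, hC, h1C⟩ := mem_entriesOf.1 h1
  obtain ⟨T, hT, htopT⟩ := mem_entriesOf.1 (fmax_mem ⟨1, h1⟩)
  have := hbelow (hint C hC T hT) (hgap C hC ((fmin_le h1C).trans hx))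
  exact absurd ((le_fmax htopT).trans this) (not_le.2 hxtop)

end Covering

namespace AdmissibleConfig

variable {n : ℕ} {S : Finset (Finset ℤ)} {T : Finset ℤ}

lemma isChainCollection (hS : AdmissibleConfig n S) : IsChainCollection S := hS.1

lemma isCovered (hS : AdmissibleConfig n S) : IsCovered S := hS.2.1.isCovered hS.2.2.2.2

lemma card_entriesOf (hS : AdmissibleConfig n S) : (entriesOf S).card = n := hS.2.2.1

lemma pos (hS : AdmissibleConfig n S) : ∀ x ∈ entriesOf S, 0 < x := hS.2.2.2.1

lemma one_mem (hS : AdmissibleConfig n S) : (1 : ℤ) ∈ entriesOf S := hS.2.2.2.2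

lemma of_isCovered (hS : IsChainCollection S) (hcov : IsCovered S) (hcard : (entriesOf S).card = n)
    (hpos : ∀ x ∈ entriesOf S, 0 < x) (h1 : (1 : ℤ) ∈ entriesOf S) : AdmissibleConfig n S :=
  ⟨hS, hcov.interlaced hS hpos, hcard, hpos, h1⟩

lemma le_topEntry (hS : AdmissibleConfig n S) : (n : ℤ) ≤ topEntry S := by
  have hsub : entriesOf S ⊆ Icc 1 (topEntry S) := fun x hx =>
    mem_Icc.2 ⟨hS.pos x hx, le_fmax hx⟩
  have := card_le_card hsub
  have h1 : 1 ≤ topEntry S := le_fmax hS.one_mem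
  rw [hS.card_entriesOf, Int.card_Icc] at this
  omega

lemma topEntry_le (hS : AdmissibleConfig n S) : topEntry S ≤ 2 * n := by
  set E := entriesOf S
  -- a chain straddling `(y - 1, y)` contains `y - 1` or `y`, since chains have step `2`
  have hsub : Icc 1 (topEntry S) ⊆ E ∪ E.image (· + 1) := by
    intro y hy
    obtain ⟨hy₁, hy₂⟩ := mem_Icc.1 hy
    obtain rfl | hy₁ := hy₁.eq_or_lt
    · exact mem_union_left _ hS.one_mem
    obtain ⟨C, hC, h₁, h₂⟩ := hS.isCovered (y - 1) (by omega) (by omega)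
    obtain h | h := (hS.isChainCollection.1 C hC).mem_or_add_one_mem h₁ h₂
    · exact mem_union_right _ (mem_image.2 ⟨y - 1, subset_entriesOf hC h, by ring⟩)
    · exact mem_union_left _ (subset_entriesOf hC (by simpa using h))
  have := (card_le_card hsub).trans
    ((card_union_le _ _).trans (Nat.add_le_add_left card_image_le _))
  rw [Int.card_Icc, hS.card_entriesOf] at this
  omega

lemma subset_Icc (hS : AdmissibleConfig n S) {C : Finset ℤ} (hC : C ∈ S) :
    C ⊆ Icc 1 (2 * n) := fun x hx =>
  mem_Icc.2 ⟨hS.pos x (subset_entriesOf hC hx),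
    (le_fmax (subset_entriesOf hC hx)).trans hS.topEntry_le⟩

lemma setOf_finite (n : ℕ) : {S | AdmissibleConfig n S}.Finite :=
  (Icc (1 : ℤ) (2 * n)).powerset.powerset.finite_toSet.subset fun _ hS =>
    mem_powerset.2 fun _ hC => mem_powerset.2 (subset_Icc hS hC)

lemma exists_top_chain (hS : AdmissibleConfig n S) (hn : 2 ≤ n) :
    3 ≤ topEntry S ∧ ∃ T ∈ S, topEntry S ∈ T ∧ topEntry S - 2 ∈ T := by
  have htop := hS.le_topEntry
  obtain ⟨T, hT, h₁, h₂⟩ := hS.isCovered (topEntry S - 1) (by omega) (by omega)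
  have hTchain := hS.isChainCollection.1 T hT
  have hTle : fmax T ≤ topEntry S := le_fmax (subset_entriesOf hT (fmax_mem hTchain.nonempty))
  have hTtop : fmax T = topEntry S := hTle.antisymm (by omega)
  have hmem := hTchain.fmax_sub_two_mem (by omega)
  rw [hTtop] at hmem
  exact ⟨by linarith [hS.pos _ (subset_entriesOf hT hmem)], T, hT,
    hTtop ▸ fmax_mem hTchain.nonempty, hmem⟩

lemma extendAt_fmax (hS : AdmissibleConfig n S) (hT : T ∈ S) (htop : topEntry S ≤ fmax T + 1) :
    AdmissibleConfig (n + 1) (extendAt S (fmax T) (fmax T + 2)) := by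
  have hTchain := hS.isChainCollection.1 T hT
  have haT : fmax T ∈ T := fmax_mem hTchain.nonempty
  have haE := subset_entriesOf hT haT
  have hfresh : fmax T + 2 ∉ entriesOf S := fun h => by
    have : fmax T + 2 ≤ topEntry S := le_fmax h
    omega
  have hentries := hS.isChainCollection.entriesOf_extendAt hT haT (fmax T + 2)
  have hnewtop := hS.isChainCollection.topEntry_extendAt hT haT (b := fmax T + 2) (by omega)
  refine of_isCovered ?_ ?_ ?_ ?_ ?_
  · rw [hS.isChainCollection.extendAt_eq hT haT]
    exact hS.isChainCollection.replace hT hTchain.insert_fmax_add_two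
      (disjoint_insert_left.2 ⟨fun h => hfresh (mem_sdiff.1 h).1, disjoint_sdiff⟩)
  · intro x hx hxtop
    rw [hnewtop] at hxtop
    rw [hS.isChainCollection.extendAt_eq hT haT]
    -- gaps that the extended chain does not straddle lie below `fmin T`, hence below the old top
    by_cases hTx : fmin T ≤ x
    · exact ⟨_, mem_insert_self _ _,
        (fmin_le (mem_insert_of_mem (fmin_mem hTchain.nonempty))).trans hTx,
        hxtop.trans_le (le_fmax (mem_insert_self _ _))⟩
    · have : fmax T ≤ topEntry S := le_fmax haE
      obtain ⟨C, hC, h₁, h₂⟩ := hS.isCovered x hx (by linarith [fmin_le haT])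
      exact ⟨C, mem_insert_of_mem (mem_erase.2 ⟨by rintro rfl; exact hTx h₁, hC⟩), h₁, h₂⟩
  · rw [hentries, card_insert_of_notMem hfresh, hS.card_entriesOf]
  · rw [hentries]
    exact forall_mem_insert _ _ _ |>.2 ⟨by linarith [hS.pos _ haE], hS.pos⟩
  · rw [hentries]
    exact mem_insert_of_mem hS.one_mem

lemma insert_singleton (hS : AdmissibleConfig n S) {y : ℤ} (hy : y ∉ entriesOf S) (hy₀ : 0 < y)
    (hytop : y ≤ topEntry S) : AdmissibleConfig (n + 1) (insert {y} S) := by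
  have hentries : entriesOf (insert {y} S) = insert y (entriesOf S) := entriesOf_insert_singleton
  have hnewtop := topEntry_insert_singleton ⟨1, hS.one_mem⟩ hytop
  refine of_isCovered (hS.isChainCollection.insert_of_disjoint (isChainSet_singleton y)
    (disjoint_singleton_left.2 hy)) ?_ ?_ ?_ ?_
  · intro x hx hxtop
    obtain ⟨C, hC, h⟩ := hS.isCovered x hx (hnewtop ▸ hxtop)
    exact ⟨C, mem_insert_of_mem hC, h⟩
  · rw [hentries, card_insert_of_notMem hy, hS.card_entriesOf]
  · rw [hentries]
    exact forall_mem_insert _ _ _ |>.2 ⟨hy₀, hS.pos⟩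
  · rw [hentries]
    exact mem_insert_of_mem hS.one_mem

lemma erase_singleton (hS : AdmissibleConfig (n + 1) S) {y : ℤ} (hy : {y} ∈ S) (hy₁ : y ≠ 1)
    (hytop : y ≠ topEntry S) : AdmissibleConfig n (S.erase {y}) := by
  have hentries : entriesOf (S.erase {y}) = (entriesOf S).erase y := by
    rw [hS.isChainCollection.entriesOf_erase hy, sdiff_singleton_eq_erase]
  have hnewtop := hS.isChainCollection.topEntry_erase hy ⟨1, hS.one_mem⟩
    fun h => hytop (mem_singleton.1 h).symm
  refine of_isCovered (hS.isChainCollection.subset (erase_subset _ _)) ?_ ?_ ?_ ?_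
  · intro x hx hxtop
    obtain ⟨C, hC, h₁, h₂⟩ := hS.isCovered x hx (hnewtop ▸ hxtop)
    refine ⟨C, mem_erase.2 ⟨?_, hC⟩, h₁, h₂⟩
    rintro rfl
    have := mem_singleton.1 (fmin_mem (singleton_nonempty y))
    have := mem_singleton.1 (fmax_mem (singleton_nonempty y))
    omega
  · rw [hentries, card_erase_of_mem (subset_entriesOf hy (mem_singleton_self y)),
      hS.card_entriesOf, Nat.add_sub_cancel]
  · rw [hentries]
    exact fun x hx => hS.pos x (mem_of_mem_erase hx)
  · rw [hentries]
    exact mem_erase.2 ⟨hy₁.symm, hS.one_mem⟩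

lemma eraseAt_topEntry (hS : AdmissibleConfig (n + 1) S) (hT : T ∈ S) (htop : topEntry S ∈ T)
    (htop₂ : topEntry S - 2 ∈ T) (hsing : {topEntry S - 1} ∉ S) :
    AdmissibleConfig n (eraseAt S (topEntry S)) := by
  set M := topEntry S
  have hTchain := hS.isChainCollection.1 T hT
  have hTmax : fmax T = M := fmax_eq_topEntry hT htop
  have hM₃ : 0 < M - 2 := hS.pos _ (subset_entriesOf hT htop₂)
  have hentries := entriesOf_eraseAt S M
  have hnewtop_mem : topEntry (eraseAt S M) ∈ (entriesOf S).erase M := by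
    rw [topEntry, hentries]
    exact fmax_mem ⟨1, mem_erase.2 ⟨by omega, hS.one_mem⟩⟩
  have hnewtop : topEntry (eraseAt S M) ≤ M - 1 := by
    have : topEntry (eraseAt S M) ≤ M := le_fmax (mem_of_mem_erase hnewtop_mem)
    have := ne_of_mem_erase hnewtop_mem
    omega
  refine of_isCovered ?_ ?_ ?_ ?_ ?_
  · rw [hS.isChainCollection.eraseAt_eq hT htop]
    refine hS.isChainCollection.replace hT ?_ (disjoint_sdiff.mono_left (erase_subset _ _))
    exact hTmax ▸ hTchain.erase_fmax (hTmax ▸ (fmin_le htop₂).trans_lt (by omega))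
  · intro x hx hxtop
    rw [hS.isChainCollection.eraseAt_eq hT htop]
    obtain ⟨C, hC, h₁, h₂⟩ := hS.isCovered x hx (by omega)
    by_cases hCT : C = T
    swap
    · exact ⟨C, mem_insert_of_mem (mem_erase.2 ⟨hCT, hC⟩), h₁, h₂⟩
    subst hCT
    obtain hx₂ | rfl : x < M - 2 ∨ x = M - 2 := by omega
    · exact ⟨_, mem_insert_self _ _,
        (fmin_le (mem_erase.2 ⟨by omega, fmin_mem hTchain.nonempty⟩)).trans h₁,
        hx₂.trans_le (le_fmax (mem_erase.2 ⟨by omega, htop₂⟩))⟩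
    -- here `M - 1` is the new top, and its chain, not a singleton, reaches below `M - 2`
    · have hM₁ : M - 1 ∈ entriesOf S := by
        rw [show M - 1 = topEntry (eraseAt S M) by omega]
        exact mem_of_mem_erase hnewtop_mem
      obtain ⟨V, hV, hVC, hV₁, hV₂⟩ :=
        hS.isChainCollection.exists_straddle_topEntry_sub_two hC htop hM₁ hsing
      exact ⟨V, mem_insert_of_mem (mem_erase.2 ⟨hVC, hV⟩), hV₁, hV₂⟩
  · rw [hentries, card_erase_of_mem (subset_entriesOf hT htop), hS.card_entriesOf,
      Nat.add_sub_cancel]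
  · rw [hentries]
    exact fun x hx => hS.pos x (mem_of_mem_erase hx)
  · rw [hentries]
    exact mem_erase.2 ⟨by omega, hS.one_mem⟩

def child (S : Finset (Finset ℤ)) : Bool → Finset (Finset ℤ)
  | false => extendAt S (topEntry S) (topEntry S + 2)
  | true =>
    if topEntry S - 1 ∈ entriesOf S then extendAt S (topEntry S - 1) (topEntry S + 1)
    else insert {topEntry S - 1} S

def parent (S : Finset (Finset ℤ)) : Finset (Finset ℤ) :=
  if {topEntry S - 1} ∈ S then S.erase {topEntry S - 1} else eraseAt S (topEntry S)

lemma child_false_spec (hS : AdmissibleConfig n S) (hn : 2 ≤ n) :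
    AdmissibleConfig (n + 1) (child S false) ∧
      topEntry (child S false) - 1 ∉ entriesOf (child S false) ∧ parent (child S false) = S := by
  obtain ⟨-, T, hT, htopT, -⟩ := hS.exists_top_chain hn
  set M := topEntry S
  have hTmax : fmax T = M := fmax_eq_topEntry hT htopT
  have hfresh : ∀ y, M < y → y ∉ entriesOf S := fun y hy h => (le_fmax h).not_gt hy
  have hentries := hS.isChainCollection.entriesOf_extendAt hT htopT (M + 2)
  have htop := hS.isChainCollection.topEntry_extendAt hT htopT (b := M + 2) (by omega)
  have hgap : topEntry (child S false) - 1 ∉ entriesOf (child S false) := by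
    rw [child, htop, hentries, mem_insert, not_or]
    exact ⟨by omega, hfresh _ (by omega)⟩
  refine ⟨?_, hgap, ?_⟩
  · simpa only [child, hTmax] using hS.extendAt_fmax hT (by omega)
  · rw [parent, if_neg fun h => hgap (subset_entriesOf h (mem_singleton_self _)), child, htop]
    exact eraseAt_extendAt (hfresh _ (by omega))

lemma child_true_spec_of_mem (hS : AdmissibleConfig n S) (hn : 2 ≤ n)
    (hmem : topEntry S - 1 ∈ entriesOf S) :
    AdmissibleConfig (n + 1) (child S true) ∧
      topEntry (child S true) - 1 ∈ entriesOf (child S true) ∧ parent (child S true) = S := by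
  obtain ⟨-, T, hT, htopT, htopT₂⟩ := hS.exists_top_chain hn
  set M := topEntry S
  obtain ⟨U, hU, hMU⟩ := mem_entriesOf.1 hmem
  have hUchain := hS.isChainCollection.1 U hU
  have hUmax : fmax U = M - 1 := by
    have : fmax U ≤ M := le_fmax (subset_entriesOf hU (fmax_mem hUchain.nonempty))
    have hne : fmax U ≠ M := fun h =>
      hUchain.add_one_notMem hMU (by rw [sub_add_cancel, ← h]; exact fmax_mem hUchain.nonempty)
    linarith [le_fmax hMU, lt_of_le_of_ne this hne]
  have hc : child S true = extendAt S (M - 1) (M + 1) := if_pos hmem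
  have hfresh : M + 1 ∉ entriesOf S := fun h => (le_fmax h).not_gt (lt_add_one M)
  have htop : topEntry (child S true) = M + 1 := by
    rw [hc]
    exact hS.isChainCollection.topEntry_extendAt hU hMU (by omega)
  have hadm : AdmissibleConfig (n + 1) (child S true) := by
    have := hS.extendAt_fmax hU (by omega)
    rwa [hUmax, show M - 1 + 2 = M + 1 by ring, ← hc] at this
  refine ⟨hadm, ?_, ?_⟩
  · rw [htop, hc, hS.isChainCollection.entriesOf_extendAt hU hMU, add_sub_cancel_right]
    exact mem_insert_of_mem (fmax_mem ⟨1, hS.one_mem⟩)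
  · have hTc : T ∈ child S true := by
      rw [hc]
      refine mem_image.2 ⟨T, hT, if_neg fun h => ?_⟩
      exact (hS.isChainCollection.1 T hT).add_one_notMem h (by rwa [sub_add_cancel])
    rw [parent, htop, if_neg (hadm.isChainCollection.singleton_notMem hTc
      (by rwa [add_sub_cancel_right]) htopT₂ (by omega)), hc]
    exact eraseAt_extendAt hfresh

lemma child_true_spec_of_notMem (hS : AdmissibleConfig n S) (hn : 2 ≤ n)
    (hmem : topEntry S - 1 ∉ entriesOf S) :
    AdmissibleConfig (n + 1) (child S true) ∧
      topEntry (child S true) - 1 ∈ entriesOf (child S true) ∧ parent (child S true) = S := by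
  obtain ⟨hM₃, -⟩ := hS.exists_top_chain hn
  have hc : child S true = insert {topEntry S - 1} S := if_neg hmem
  have htop := topEntry_insert_singleton ⟨1, hS.one_mem⟩ (sub_one_lt (topEntry S)).le
  refine ⟨hc ▸ hS.insert_singleton hmem (by omega) (by omega), ?_, ?_⟩
  · rw [hc, htop, entriesOf_insert_singleton]
    exact mem_insert_self _ _
  · rw [parent, hc, htop, if_pos (mem_insert_self _ _)]
    exact erase_insert fun h => hmem (subset_entriesOf h (mem_singleton_self _))

lemma parent_spec_of_singleton_mem (hS : AdmissibleConfig (n + 1) S) (hn : 2 ≤ n)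
    (hsing : {topEntry S - 1} ∈ S) :
    AdmissibleConfig n (parent S) ∧
      child (parent S) (decide (topEntry S - 1 ∈ entriesOf S)) = S := by
  obtain ⟨hM₃, -⟩ := hS.exists_top_chain (by omega)
  set M := topEntry S
  have hp : parent S = S.erase {M - 1} := if_pos hsing
  have htop : topEntry (parent S) = M := by
    rw [hp]
    exact hS.isChainCollection.topEntry_erase hsing ⟨1, hS.one_mem⟩ (by rw [mem_singleton]; omega)
  have hgap : M - 1 ∉ entriesOf (parent S) := by
    rw [hp, hS.isChainCollection.entriesOf_erase hsing]
    simp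
  refine ⟨hp ▸ hS.erase_singleton hsing (by omega) (by omega), ?_⟩
  rw [decide_eq_true (subset_entriesOf hsing (mem_singleton_self _)), child, htop, if_neg hgap, hp,
    insert_erase hsing]

lemma parent_spec_of_singleton_notMem (hS : AdmissibleConfig (n + 1) S) (hn : 2 ≤ n)
    (hsing : {topEntry S - 1} ∉ S) :
    AdmissibleConfig n (parent S) ∧
      child (parent S) (decide (topEntry S - 1 ∈ entriesOf S)) = S := by
  obtain ⟨-, T, hT, htopT, htopT₂⟩ := hS.exists_top_chain (by omega)
  set M := topEntry S
  have hp : parent S = eraseAt S M := if_neg hsing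
  have hentries : entriesOf (parent S) = (entriesOf S).erase M := hp ▸ entriesOf_eraseAt S M
  have hM₂ : M - 2 ∈ entriesOf (parent S) :=
    hentries ▸ mem_erase.2 ⟨by omega, subset_entriesOf hT htopT₂⟩
  have hle : ∀ x ∈ entriesOf (parent S), x ≤ M - 1 := by
    rw [hentries]
    intro x hx
    have : x ≤ M := le_fmax (mem_of_mem_erase hx)
    have := ne_of_mem_erase hx
    omega
  have hrestore := hS.isChainCollection.extendAt_eraseAt hT htopT₂ htopT (by omega)
  refine ⟨hp ▸ hS.eraseAt_topEntry hT htopT htopT₂ hsing, ?_⟩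
  by_cases hmem : M - 1 ∈ entriesOf S
  · have htop : topEntry (parent S) = M - 1 :=
      fmax_eq_of_forall_le (hentries ▸ mem_erase.2 ⟨by omega, hmem⟩) hle
    rw [decide_eq_true hmem, child, htop, show M - 1 - 1 = M - 2 by ring, if_pos hM₂,
      show M - 1 + 1 = M by ring, hp, hrestore]
  · have htop : topEntry (parent S) = M - 2 := by
      refine fmax_eq_of_forall_le hM₂ fun x hx => ?_
      have hx' : x ≠ M - 1 := fun h => hmem (mem_of_mem_erase (hentries ▸ h ▸ hx))
      linarith [hle x hx, lt_of_le_of_ne (hle x hx) hx']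
    rw [decide_eq_false hmem, child, htop, show M - 2 + 2 = M by ring, hp, hrestore]

lemma child_spec (hS : AdmissibleConfig n S) (hn : 2 ≤ n) (b : Bool) :
    AdmissibleConfig (n + 1) (child S b) ∧
      decide (topEntry (child S b) - 1 ∈ entriesOf (child S b)) = b ∧ parent (child S b) = S := by
  cases b
  · obtain ⟨hadm, hgap, hp⟩ := hS.child_false_spec hn
    exact ⟨hadm, decide_eq_false hgap, hp⟩
  by_cases hmem : topEntry S - 1 ∈ entriesOf S
  · obtain ⟨hadm, hgap, hp⟩ := hS.child_true_spec_of_mem hn hmem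
    exact ⟨hadm, decide_eq_true hgap, hp⟩
  · obtain ⟨hadm, hgap, hp⟩ := hS.child_true_spec_of_notMem hn hmem
    exact ⟨hadm, decide_eq_true hgap, hp⟩

lemma parent_spec (hS : AdmissibleConfig (n + 1) S) (hn : 2 ≤ n) :
    AdmissibleConfig n (parent S) ∧
      child (parent S) (decide (topEntry S - 1 ∈ entriesOf S)) = S := by
  by_cases hsing : {topEntry S - 1} ∈ S
  · exact hS.parent_spec_of_singleton_mem hn hsing
  · exact hS.parent_spec_of_singleton_notMem hn hsing

lemma image_child (hn : 2 ≤ n) :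
    (fun p : Finset (Finset ℤ) × Bool => child p.1 p.2) '' ({S | AdmissibleConfig n S} ×ˢ .univ) =
      {S | AdmissibleConfig (n + 1) S} := by
  ext S
  constructor
  · rintro ⟨⟨S, b⟩, ⟨hS, -⟩, rfl⟩
    exact (child_spec hS hn b).1
  · intro hS
    exact ⟨(parent S, _), ⟨(parent_spec hS hn).1, trivial⟩, (parent_spec hS hn).2⟩

lemma injOn_child (hn : 2 ≤ n) :
    Set.InjOn (fun p : Finset (Finset ℤ) × Bool => child p.1 p.2)
      ({S | AdmissibleConfig n S} ×ˢ .univ) := by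
  rintro ⟨S, b⟩ ⟨hS, -⟩ ⟨S', b'⟩ ⟨hS', -⟩ (h : child S b = child S' b')
  obtain ⟨-, hb, hp⟩ := child_spec hS hn b
  obtain ⟨-, hb', hp'⟩ := child_spec hS' hn b'
  rw [h] at hb hp
  exact Prod.ext (hp.symm.trans hp') (hb.symm.trans hb')

end AdmissibleConfig

/-- For every `n ≥ 2`, the sets of admissible configurations of sizes `n` and `n + 1` are
finite, and the number of admissible configurations of size `n + 1` is exactly twice the
number of admissible configurations of size `n`. -/
theorem admissible_config_doubling (n : ℕ) (hn : 2 ≤ n) :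
    {S : Finset (Finset ℤ) | AdmissibleConfig n S}.Finite ∧
    {S : Finset (Finset ℤ) | AdmissibleConfig (n + 1) S}.Finite ∧
    {S : Finset (Finset ℤ) | AdmissibleConfig (n + 1) S}.ncard =
      2 * {S : Finset (Finset ℤ) | AdmissibleConfig n S}.ncard := by
  refine ⟨AdmissibleConfig.setOf_finite n, AdmissibleConfig.setOf_finite (n + 1), ?_⟩
  rw [← AdmissibleConfig.image_child hn, (AdmissibleConfig.injOn_child hn).ncard_image,
    Set.ncard_prod, Set.ncard_univ, Nat.card_eq_fintype_card, Fintype.card_bool, mul_comm]
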